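/- Let u be a smooth divergence-free vector field and Q a smooth compactly supported symmetric matrix-valued function on ℝ³. Then ∫_{ℝ³} tr((u·∇Q) ΔQ) dx − ∫_{ℝ³} (∇·(∇Q ⊙ ∇Q))·u dx = 0, where (∇Q ⊙ ∇Q)_{αβ} = ∂_β Q_{γδ} ∂_α Q_{γδ} (summation over repeated indices). -/

import Mathlib

open MeasureTheory ENNReal

noncomputable section

/-- Three-dimensional Euclidean space. -/
abbrev E3 : Type := EuclideanSpace ℝ (Fin 3)

/-- 3×3 real matrices (as functions). -/
abbrev Mat : Type := Fin 3 → Fin 3 → ℝ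

/-- Matrix multiplication. -/
def matMul (A B : Mat) : Mat := fun i k => ∑ j, A i j * B j k

/-- Frobenius pairing `∑ A i j * B i j`. -/
def frob (A B : Mat) : ℝ := ∑ i, ∑ j, A i j * B i j

/-- Euclidean dot product. -/
def dot3 (a b : E3) : ℝ := ∑ i, a i * b i

/-- Gradient matrix of a vector field: `(∇u)_{αβ} = ∂_β u_α`. -/
def gradMat (u : E3 → E3) (x : E3) : Mat :=
  fun α β => fderiv ℝ u x (EuclideanSpace.single β 1) α

/-- Componentwise Laplacian. -/
def lap {F : Type} [NormedAddCommGroup F] [NormedSpace ℝ F] (f : E3 → F) (x : E3) : F :=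
  ∑ i : Fin 3, fderiv ℝ (fun y => fderiv ℝ f y (EuclideanSpace.single i 1)) x
    (EuclideanSpace.single i 1)

/-- `H¹` (Sobolev) norm: `‖f‖_{L²} + ‖∇f‖_{L²}`. -/
def H1 {F : Type} [NormedAddCommGroup F] [NormedSpace ℝ F] (f : E3 → F) : ℝ≥0∞ :=
  eLpNorm f 2 volume + eLpNorm (fun x => fderiv ℝ f x) 2 volume

/-- `H²` (Sobolev) norm. -/
def H2 {F : Type} [NormedAddCommGroup F] [NormedSpace ℝ F] (f : E3 → F) : ℝ≥0∞ :=
  H1 f + eLpNorm (fun x => fderiv ℝ (fderiv ℝ f) x) 2 volume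

/-- Mixed space-time norm `‖ t ↦ X(f t) ‖_{L^q(0,T)}` where `X` is a spatial norm. -/
def LqX {F : Type} (q : ℝ≥0∞) (T : ℝ) (X : (E3 → F) → ℝ≥0∞) (f : ℝ → E3 → F) : ℝ≥0∞ :=
  eLpNorm (fun t => (X (f t)).toReal) q (volume.restrict (Set.Ioo 0 T))


/-- The matrix `∇Q ⊙ ∇Q`, with entries `(∇Q ⊙ ∇Q)_{αβ} = ∂_β Q_{γδ} ∂_α Q_{γδ}`. -/
def odot (Q : E3 → Mat) (x : E3) : Mat :=
  fun α β => frob (fderiv ℝ Q x (EuclideanSpace.single β 1))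
    (fderiv ℝ Q x (EuclideanSpace.single α 1))


/-! ### Auxiliary material -/

/-- Standard basis vectors. -/
def ee (i : Fin 3) : E3 := EuclideanSpace.single i 1

lemma frob_comm (A B : Mat) : frob A B = frob B A := by
  simp [frob, mul_comm]

lemma frob_add_left (A B C : Mat) : frob (A + B) C = frob A C + frob B C := by
  simp [frob, add_mul, Finset.sum_add_distrib]

lemma frob_sum_left {ι : Type*} (s : Finset ι) (A : ι → Mat) (B : Mat) :
    frob (∑ i ∈ s, A i) B = ∑ i ∈ s, frob (A i) B := by
  classical
  induction s using Finset.induction with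
  | empty => simp [frob]
  | insert _ _ h ih => rw [Finset.sum_insert h, Finset.sum_insert h, frob_add_left, ih]

lemma frob_sum_right {ι : Type*} (s : Finset ι) (A : Mat) (B : ι → Mat) :
    frob A (∑ i ∈ s, B i) = ∑ i ∈ s, frob A (B i) := by
  rw [frob_comm, frob_sum_left]
  exact Finset.sum_congr rfl fun i _ => frob_comm _ _

lemma frob_smul_left (c : ℝ) (A B : Mat) : frob (c • A) B = c * frob A B := by
  simp [frob, Finset.mul_sum, mul_assoc]

lemma continuous_frob {X : Type*} [TopologicalSpace X] {F G : X → Mat}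
    (hF : Continuous F) (hG : Continuous G) :
    Continuous fun x => frob (F x) (G x) := by
  simp only [frob]
  refine continuous_finset_sum _ fun i _ => continuous_finset_sum _ fun j _ => ?_
  exact (((continuous_apply j).comp ((continuous_apply i).comp hF))).mul
    (((continuous_apply j).comp ((continuous_apply i).comp hG)))

lemma contDiff_frob {F G : E3 → Mat} (hF : ContDiff ℝ (⊤ : ℕ∞) F) (hG : ContDiff ℝ (⊤ : ℕ∞) G) :
    ContDiff ℝ (⊤ : ℕ∞) fun x => frob (F x) (G x) := by
  simp only [frob]
  refine ContDiff.sum fun i _ => ContDiff.sum fun j _ => ContDiff.mul ?_ ?_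
  · exact ((ContinuousLinearMap.proj j).comp
      (ContinuousLinearMap.proj i : Mat →L[ℝ] (Fin 3 → ℝ))).contDiff.comp hF
  · exact ((ContinuousLinearMap.proj j).comp
      (ContinuousLinearMap.proj i : Mat →L[ℝ] (Fin 3 → ℝ))).contDiff.comp hG

/-- Derivative of the Frobenius pairing of two matrix-valued functions. -/
lemma fderiv_frob_apply {A B : E3 → Mat} (hA : Differentiable ℝ A) (hB : Differentiable ℝ B)
    (x v : E3) :
    fderiv ℝ (fun y => frob (A y) (B y)) x v
      = frob (fderiv ℝ A x v) (B x) + frob (A x) (fderiv ℝ B x v) := by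
  have hcomp : ∀ (C : E3 → Mat), Differentiable ℝ C → ∀ γ δ : Fin 3,
      HasFDerivAt (fun y => C y γ δ)
        (((ContinuousLinearMap.proj δ).comp (ContinuousLinearMap.proj γ : Mat →L[ℝ] (Fin 3 → ℝ))).comp
          (fderiv ℝ C x)) x := by
    intro C hC γ δ
    exact (((ContinuousLinearMap.proj δ).comp
      (ContinuousLinearMap.proj γ : Mat →L[ℝ] (Fin 3 → ℝ))).hasFDerivAt).comp x (hC x).hasFDerivAt
  have H : HasFDerivAt (fun y => frob (A y) (B y))
      (∑ γ : Fin 3, ∑ δ : Fin 3,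
        (A x γ δ • (((ContinuousLinearMap.proj δ).comp (ContinuousLinearMap.proj γ : Mat →L[ℝ] (Fin 3 → ℝ))).comp (fderiv ℝ B x))
          + B x γ δ • (((ContinuousLinearMap.proj δ).comp (ContinuousLinearMap.proj γ : Mat →L[ℝ] (Fin 3 → ℝ))).comp (fderiv ℝ A x)))) x := by
    simp only [frob]
    apply HasFDerivAt.fun_sum; intro γ _
    apply HasFDerivAt.fun_sum; intro δ _
    exact (hcomp A hA γ δ).mul (hcomp B hB γ δ)
  rw [H.fderiv]
  simp only [ContinuousLinearMap.sum_apply, ContinuousLinearMap.add_apply,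
    ContinuousLinearMap.smul_apply, ContinuousLinearMap.coe_comp', Function.comp_apply,
    ContinuousLinearMap.proj_apply, frob, smul_eq_mul]
  rw [← Finset.sum_add_distrib]
  refine Finset.sum_congr rfl fun γ _ => ?_
  rw [← Finset.sum_add_distrib]
  refine Finset.sum_congr rfl fun δ _ => ?_
  ring

/-- Vector decomposition in the standard basis. -/
lemma vec_decomp (z : E3) : z = ∑ α : Fin 3, z α • ee α := by
  ext i
  simp only [ee, Finset.sum_apply, PiLp.smul_apply, EuclideanSpace.single_apply, smul_eq_mul]
  fin_cases i <;> simp [Fin.sum_univ_three]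

/-- Integral of a directional derivative of a compactly supported smooth function vanishes. -/
lemma integral_fderiv_apply_zero (f : E3 → ℝ) (hf : ContDiff ℝ (⊤ : ℕ∞) f)
    (hfs : HasCompactSupport f) (v : E3) :
    ∫ x : E3, fderiv ℝ f x v = 0 := by
  have hfd : Differentiable ℝ f := hf.differentiable (by simp)
  have hder : Continuous fun x => fderiv ℝ f x v :=
    ((hf.fderiv_right (m := (⊤ : ℕ∞)) (by simp)).continuous).clm_apply continuous_const
  have hdersupp : HasCompactSupport fun x => fderiv ℝ f x v := hfs.fderiv_apply ℝ v
  have h1 : ∫ x : E3, (1:ℝ) * fderiv ℝ f x v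
      = - ∫ x : E3, fderiv ℝ (fun _ : E3 => (1:ℝ)) x v * f x := by
    apply integral_mul_fderiv_eq_neg_fderiv_mul_of_integrable
    · simp
    · simpa using hder.integrable_of_hasCompactSupport hdersupp
    · simpa using hf.continuous.integrable_of_hasCompactSupport hfs
    · exact fun x _ => differentiable_const (1:ℝ) x
    · exact fun x _ => hfd x
  simpa using h1

/-- The directional derivative of `Q`. -/
def Pd (Q : E3 → Mat) (β : Fin 3) (y : E3) : Mat := fderiv ℝ Q y (ee β)

/-- The Dirichlet-energy density `|∇Q|²`. -/
def hEnergy (Q : E3 → Mat) (y : E3) : ℝ := ∑ β : Fin 3, frob (Pd Q β y) (Pd Q β y)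

/-- `∫ tr((u·∇Q) ΔQ) − ∫ (∇·(∇Q ⊙ ∇Q))·u = 0` for smooth divergence-free `u`
and smooth compactly supported symmetric `Q`. -/
theorem stmt10 (u : E3 → E3) (Q : E3 → Mat)
    (hu : ContDiff ℝ (⊤ : ℕ∞) u)
    (hdiv : ∀ x : E3, ∑ i : Fin 3, fderiv ℝ u x (EuclideanSpace.single i 1) i = 0)
    (hQ : ContDiff ℝ (⊤ : ℕ∞) Q) (hQs : HasCompactSupport Q)
    (hQsym : ∀ x i j, Q x i j = Q x j i) :
    (∫ x : E3, frob (fderiv ℝ Q x (u x)) (lap Q x))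
      - (∫ x : E3, ∑ α : Fin 3,
          (∑ β : Fin 3, fderiv ℝ (fun y => odot Q y α β) x (EuclideanSpace.single β 1))
            * u x α) = 0 := by
  have hQd : Differentiable ℝ Q := hQ.differentiable (by simp)
  have hud : Differentiable ℝ u := hu.differentiable (by simp)
  have hQ' : ContDiff ℝ (⊤ : ℕ∞) (fderiv ℝ Q) := hQ.fderiv_right (m := (⊤ : ℕ∞)) (by simp)
  have hQ'd : Differentiable ℝ (fderiv ℝ Q) := hQ'.differentiable (by simp)
  -- smoothness and support of directional derivatives
  have hPc : ∀ β, ContDiff ℝ (⊤ : ℕ∞) (Pd Q β) := fun β =>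
    (ContinuousLinearMap.apply ℝ Mat (ee β)).contDiff.comp hQ'
  have hPd : ∀ β, Differentiable ℝ (Pd Q β) := fun β => (hPc β).differentiable (by simp)
  have hPsupp : ∀ β, HasCompactSupport (Pd Q β) := fun β =>
    (hQs.fderiv ℝ).comp_left (g := fun L : E3 →L[ℝ] Mat => L (ee β)) rfl
  -- Schwarz symmetry of second derivatives
  have hSchwarz : ∀ (x : E3) (β α : Fin 3),
      fderiv ℝ (Pd Q α) x (ee β) = fderiv ℝ (Pd Q β) x (ee α) := by
    intro x β α
    have happ : ∀ z : Fin 3, fderiv ℝ (Pd Q z) x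
        = (ContinuousLinearMap.apply ℝ Mat (ee z)).comp (fderiv ℝ (fderiv ℝ Q) x) := fun z =>
      (((ContinuousLinearMap.apply ℝ Mat (ee z)).hasFDerivAt).comp x (hQ'd x).hasFDerivAt).fderiv
    rw [happ α, happ β]
    simp only [ContinuousLinearMap.coe_comp', Function.comp_apply,
      ContinuousLinearMap.apply_apply]
    exact second_derivative_symmetric (fun y => (hQd y).hasFDerivAt) (hQ'd x).hasFDerivAt _ _
  -- derivative of the entries of `odot`
  have hod : ∀ (x : E3) (α β ν : Fin 3),
      fderiv ℝ (fun y => odot Q y α β) x (ee ν)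
        = frob (fderiv ℝ (Pd Q β) x (ee ν)) (Pd Q α x)
          + frob (Pd Q β x) (fderiv ℝ (Pd Q α) x (ee ν)) := by
    intro x α β ν
    have h : (fun y => odot Q y α β) = fun y => frob (Pd Q β y) (Pd Q α y) := rfl
    rw [h, fderiv_frob_apply (hPd β) (hPd α)]
  -- energy density
  have hEc : ContDiff ℝ (⊤ : ℕ∞) (hEnergy Q) := by
    unfold hEnergy
    exact ContDiff.sum fun β _ => contDiff_frob (hPc β) (hPc β)
  have hEsupp : HasCompactSupport (hEnergy Q) := by
    refine HasCompactSupport.intro (hQs.fderiv ℝ) fun x hx => ?_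
    have h0 : fderiv ℝ Q x = 0 := image_eq_zero_of_notMem_tsupport hx
    simp [hEnergy, Pd, h0, frob]
  -- the auxiliary scalar fields and integration by parts
  set fA : Fin 3 → E3 → ℝ := fun α y => hEnergy Q y * u y α with hfA
  have huc : ∀ α : Fin 3, ContDiff ℝ (⊤ : ℕ∞) (fun y => u y α) := fun α =>
    (EuclideanSpace.proj α : E3 →L[ℝ] ℝ).contDiff.comp hu
  have hfAc : ∀ α, ContDiff ℝ (⊤ : ℕ∞) (fA α) := fun α => hEc.mul (huc α)
  have hfAs : ∀ α, HasCompactSupport (fA α) := fun α => hEsupp.mul_right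
  have hibp : ∀ α, (∫ x : E3, fderiv ℝ (fA α) x (ee α)) = 0 := fun α =>
    integral_fderiv_apply_zero _ (hfAc α) (hfAs α) _
  -- derivative of u components
  have huproj : ∀ (x : E3) (α : Fin 3) (v : E3),
      fderiv ℝ (fun y => u y α) x v = fderiv ℝ u x v α := by
    intro x α v
    have h2 : fderiv ℝ (fun y => u y α) x
        = (EuclideanSpace.proj α : E3 →L[ℝ] ℝ).comp (fderiv ℝ u x) :=
      ((EuclideanSpace.proj α : E3 →L[ℝ] ℝ).hasFDerivAt.comp x (hud x).hasFDerivAt).fderiv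
    rw [h2]; rfl
  have hlap : ∀ x : E3, lap Q x = ∑ β : Fin 3, fderiv ℝ (Pd Q β) x (ee β) := fun x => rfl
  -- the key pointwise identity
  have key : ∀ x : E3,
      (∑ α : Fin 3, (∑ β : Fin 3,
          fderiv ℝ (fun y => odot Q y α β) x (EuclideanSpace.single β 1)) * u x α)
        = frob (fderiv ℝ Q x (u x)) (lap Q x)
          + (1/2) * ∑ α : Fin 3, fderiv ℝ (fA α) x (ee α) := by
    intro x
    set a : Fin 3 → ℝ :=
      fun α => ∑ β : Fin 3, frob (Pd Q α x) (fderiv ℝ (Pd Q β) x (ee β)) with ha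
    set b : Fin 3 → ℝ :=
      fun α => ∑ β : Fin 3, frob (Pd Q β x) (fderiv ℝ (Pd Q β) x (ee α)) with hb
    -- derivative of the energy density
    have h2 : ∀ v : E3, fderiv ℝ (hEnergy Q) x v
        = ∑ β : Fin 3, (frob (fderiv ℝ (Pd Q β) x v) (Pd Q β x)
            + frob (Pd Q β x) (fderiv ℝ (Pd Q β) x v)) := by
      intro v
      have hh : (hEnergy Q) = fun y => ∑ β : Fin 3, frob (Pd Q β y) (Pd Q β y) := rfl
      rw [hh, fderiv_fun_sum fun β _ =>
        (contDiff_frob (hPc β) (hPc β)).differentiable (by simp) x]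
      rw [ContinuousLinearMap.sum_apply]
      exact Finset.sum_congr rfl fun β _ => fderiv_frob_apply (hPd β) (hPd β) x v
    -- derivative of fA
    have hfAder : ∀ α : Fin 3, fderiv ℝ (fA α) x (ee α)
        = 2 * b α * u x α + hEnergy Q x * fderiv ℝ u x (ee α) α := by
      intro α
      have h1 : fderiv ℝ (fA α) x = hEnergy Q x • fderiv ℝ (fun y => u y α) x
          + u x α • fderiv ℝ (hEnergy Q) x :=
        fderiv_mul (hEc.differentiable (by simp) x) ((huc α).differentiable (by simp) x)
      have h3 : fderiv ℝ (hEnergy Q) x (ee α) = 2 * b α := by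
        have hbα : b α = ∑ β : Fin 3, frob (Pd Q β x) (fderiv ℝ (Pd Q β) x (ee α)) := rfl
        rw [h2 (ee α), hbα, Finset.mul_sum]
        refine Finset.sum_congr rfl fun β _ => ?_
        rw [frob_comm (fderiv ℝ (Pd Q β) x (ee α)) (Pd Q β x)]
        ring
      rw [h1]
      simp only [ContinuousLinearMap.add_apply, ContinuousLinearMap.smul_apply, smul_eq_mul]
      rw [h3, huproj x α (ee α)]
      ring
    -- the divergence-free condition
    have hdivterm : ∑ α : Fin 3, hEnergy Q x * fderiv ℝ u x (ee α) α = 0 := by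
      rw [← Finset.mul_sum]
      have : ∑ α : Fin 3, fderiv ℝ u x (ee α) α = 0 := hdiv x
      rw [this, mul_zero]
    -- the transport term
    have hfQu : fderiv ℝ Q x (u x) = ∑ α : Fin 3, u x α • Pd Q α x := by
      conv_lhs => rw [vec_decomp (u x)]
      rw [map_sum]
      exact Finset.sum_congr rfl fun α _ => (fderiv ℝ Q x).map_smul (u x α) (ee α)
    have hI1 : frob (fderiv ℝ Q x (u x)) (lap Q x) = ∑ α : Fin 3, u x α * a α := by
      rw [hfQu, frob_sum_left]
      refine Finset.sum_congr rfl fun α _ => ?_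
      rw [frob_smul_left, hlap x, frob_sum_right, ha]
    -- rewrite the left-hand side
    have hLHS : (∑ α : Fin 3, (∑ β : Fin 3,
          fderiv ℝ (fun y => odot Q y α β) x (EuclideanSpace.single β 1)) * u x α)
        = ∑ α : Fin 3, (a α + b α) * u x α := by
      refine Finset.sum_congr rfl fun α _ => ?_
      congr 1
      rw [ha, hb, ← Finset.sum_add_distrib]
      refine Finset.sum_congr rfl fun β _ => ?_
      have hx1 : fderiv ℝ (fun y => odot Q y α β) x (EuclideanSpace.single β 1)
          = fderiv ℝ (fun y => odot Q y α β) x (ee β) := rfl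
      rw [hx1, hod x α β β, hSchwarz x β α,
        frob_comm (fderiv ℝ (Pd Q β) x (ee β)) (Pd Q α x)]
    rw [hLHS, hI1]
    have hsum : ∑ α : Fin 3, fderiv ℝ (fA α) x (ee α)
        = ∑ α : Fin 3, 2 * b α * u x α := by
      rw [Finset.sum_congr rfl fun α _ => hfAder α, Finset.sum_add_distrib, hdivterm, add_zero]
    rw [hsum, Finset.mul_sum, ← Finset.sum_add_distrib]
    refine Finset.sum_congr rfl fun α _ => ?_
    ring
  -- integrability of the pieces
  have hI1cont : Continuous fun x : E3 => frob (fderiv ℝ Q x (u x)) (lap Q x) := by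
    have hlapc : Continuous fun x : E3 => lap Q x := by
      have : (fun x : E3 => lap Q x)
          = fun x => ∑ β : Fin 3, fderiv ℝ (Pd Q β) x (ee β) := funext hlap
      rw [this]
      exact continuous_finset_sum _ fun β _ =>
        (((hPc β).fderiv_right (m := (⊤ : ℕ∞)) (by simp)).continuous).clm_apply continuous_const
    exact continuous_frob (hQ'.continuous.clm_apply hu.continuous) hlapc
  have hI1supp : HasCompactSupport fun x : E3 => frob (fderiv ℝ Q x (u x)) (lap Q x) := by
    refine HasCompactSupport.intro (hQs.fderiv ℝ) fun x hx => ?_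
    have h0 : fderiv ℝ Q x = 0 := image_eq_zero_of_notMem_tsupport hx
    rw [h0]
    simp [frob]
  have hI1int : Integrable (fun x : E3 => frob (fderiv ℝ Q x (u x)) (lap Q x)) volume :=
    hI1cont.integrable_of_hasCompactSupport hI1supp
  have hDint_each : ∀ α : Fin 3,
      Integrable (fun x : E3 => fderiv ℝ (fA α) x (ee α)) volume := fun α =>
    ((((hfAc α).fderiv_right (m := (⊤ : ℕ∞)) (by simp)).continuous).clm_apply
      continuous_const).integrable_of_hasCompactSupport ((hfAs α).fderiv_apply ℝ (ee α))
  have hDint : Integrable (fun x : E3 => ∑ α : Fin 3, fderiv ℝ (fA α) x (ee α)) volume :=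
    integrable_finset_sum _ fun α _ => hDint_each α
  have hDzero : (∫ x : E3, ∑ α : Fin 3, fderiv ℝ (fA α) x (ee α)) = 0 := by
    rw [integral_finset_sum _ fun α _ => hDint_each α]
    simp [hibp]
  -- final assembly
  have hre : (∫ x : E3, ∑ α : Fin 3,
        (∑ β : Fin 3, fderiv ℝ (fun y => odot Q y α β) x (EuclideanSpace.single β 1)) * u x α)
      = ∫ x : E3, (frob (fderiv ℝ Q x (u x)) (lap Q x)
          + (1/2) * ∑ α : Fin 3, fderiv ℝ (fA α) x (ee α)) := by
    exact integral_congr_ae (Filter.Eventually.of_forall key)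
  rw [hre, integral_add hI1int (hDint.const_mul _), integral_const_mul, hDzero]
  ring
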